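/- If h, c, ψ are continuous functions of exponential order on [0,∞) satisfying the renewal equation h(t) = c(t) + ∫₀^t ψ(t−x) h(x) dx, and the Neumann series Σ_{m≥1} ψ_m converges locally uniformly (where ψ₁ = ψ and ψ_{m+1} = ψ ∗ ψ_m), then h(t) = c(t) + Σ_{m=1}^∞ (ψ_m ∗ c)(t). -/

import Mathlib

/-!
Write `f ∗ g` for the Laplace convolution. Iterating `h = c + ψ ∗ h` gives
`h = c + ∑_{m=1}^{N} ψ_m ∗ c + ψ_{N+1} ∗ h`, where the regrouping `ψ_m ∗ (ψ ∗ h) = ψ_{m+1} ∗ h`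
is associativity of `∗`, i.e. Fubini on the triangle `x, y ≥ 0, x + y ≤ t`. By induction
`|ψ_m(x)| ≤ K^m x^{m-1}/(m-1)! e^{x/γ}`, so `|(ψ_m ∗ f)(t)| ≤ K e^{t/γ} (Kt)^m/m!` for
`f = c, h`: the series `∑ ψ_m ∗ c` converges absolutely and the remainder `ψ_{N+1} ∗ h` tends
to zero.
-/

open MeasureTheory Set intervalIntegral Filter

/-- The iterated self-convolutions of ψ : `convPow ψ m` is ψ_{m+1}, so
`convPow ψ 0 = ψ₁ = ψ` and ψ_{m+1} = ψ ∗ ψ_m. -/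
noncomputable def convPow (ψ : ℝ → ℝ) : ℕ → (ℝ → ℝ)
  | 0 => ψ
  | m + 1 => fun t => ∫ x in (0:ℝ)..t, ψ (t - x) * convPow ψ m x

open scoped Topology Nat

section Simplex

variable {E : Type*} [NormedAddCommGroup E]

def simplex (t : ℝ) : Set (ℝ × ℝ) := {p | 0 < p.1 ∧ 0 < p.2 ∧ p.1 + p.2 ≤ t}

lemma measurableSet_simplex (t : ℝ) : MeasurableSet (simplex t) :=
  (measurableSet_lt measurable_const measurable_fst).inter
    ((measurableSet_lt measurable_const measurable_snd).inter
      (measurableSet_le (measurable_fst.add measurable_snd) measurable_const))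

lemma swap_mem_simplex {t : ℝ} {p : ℝ × ℝ} : p.swap ∈ simplex t ↔ p ∈ simplex t := by
  simp only [simplex, mem_ofPred_eq, Prod.fst_swap, Prod.snd_swap, add_comm p.2]
  tauto

lemma integrable_indicator_simplex {F : ℝ → ℝ → E} (hF : Continuous (Function.uncurry F))
    (t : ℝ) : Integrable ((simplex t).indicator (Function.uncurry F)) (volume.prod volume) := by
  rw [← Measure.volume_eq_prod, integrable_indicator_iff (measurableSet_simplex t)]
  have hsub : simplex t ⊆ Icc (0, 0) (t, t) := by
    rintro ⟨x, y⟩ ⟨hx, hy, hxy⟩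
    exact ⟨⟨hx.le, hy.le⟩, by constructor <;> dsimp only at * <;> linarith⟩
  exact (hF.continuousOn.integrableOn_compact isCompact_Icc).mono_set hsub

lemma intervalIntegral_intervalIntegral_eq_integral_indicator_simplex [NormedSpace ℝ E]
    (F : ℝ → ℝ → E) {t : ℝ} (ht : 0 ≤ t) :
    ∫ x in (0:ℝ)..t, ∫ y in (0:ℝ)..(t - x), F x y
      = ∫ x, ∫ y, (simplex t).indicator (Function.uncurry F) (x, y) := by
  rw [integral_of_le ht, ← MeasureTheory.integral_indicator measurableSet_Ioc]
  congr 1 with x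
  by_cases hx : x ∈ Ioc 0 t
  · rw [indicator_of_mem hx, integral_of_le (by linarith [hx.2]),
      ← MeasureTheory.integral_indicator measurableSet_Ioc]
    congr 1 with y
    simp only [indicator, simplex, mem_Ioc, mem_ofPred_eq, Function.uncurry_apply_pair]
    congr 1
    exact propext ⟨fun ⟨hy, _⟩ => ⟨hx.1, hy, by linarith⟩, fun ⟨_, hy, _⟩ => ⟨hy, by linarith⟩⟩
  · rw [indicator_of_notMem hx]
    refine (integral_eq_zero_of_ae (Eventually.of_forall fun y => indicator_of_notMem ?_ _)).symm
    rintro ⟨h0, hy, hxy⟩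
    exact hx ⟨h0, by linarith⟩

theorem intervalIntegral_intervalIntegral_swap_simplex [NormedSpace ℝ E] {F : ℝ → ℝ → E}
    (hF : Continuous (Function.uncurry F)) {t : ℝ} (ht : 0 ≤ t) :
    ∫ x in (0:ℝ)..t, ∫ y in (0:ℝ)..(t - x), F x y
      = ∫ y in (0:ℝ)..t, ∫ x in (0:ℝ)..(t - y), F x y := by
  have hswap : (simplex t).indicator (Function.uncurry fun y x => F x y)
      = fun p => (simplex t).indicator (Function.uncurry F) p.swap := by
    ext p
    by_cases hp : p ∈ simplex t
    · rw [indicator_of_mem hp, indicator_of_mem (swap_mem_simplex.2 hp)]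
      rfl
    · rw [indicator_of_notMem hp, indicator_of_notMem (mt swap_mem_simplex.1 hp)]
  rw [intervalIntegral_intervalIntegral_eq_integral_indicator_simplex _ ht,
    intervalIntegral_intervalIntegral_eq_integral_indicator_simplex _ ht, hswap,
    integral_integral_swap (f := fun x y => (simplex t).indicator (Function.uncurry F) (x, y))
      (integrable_indicator_simplex hF t)]
  rfl

end Simplex

noncomputable def laplaceConv (f g : ℝ → ℝ) (t : ℝ) : ℝ := ∫ x in (0:ℝ)..t, f (t - x) * g x

lemma laplaceConv_comm (f g : ℝ → ℝ) : laplaceConv f g = laplaceConv g f := by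
  ext t
  have h := integral_comp_sub_left (a := 0) (b := t) (fun x => g (t - x) * f x) t
  simp only [sub_sub_cancel, sub_zero, sub_self] at h
  rw [laplaceConv, laplaceConv, ← h]
  simp only [mul_comm]

lemma laplaceConv_congr_right {f g g' : ℝ → ℝ} {t : ℝ} (ht : 0 ≤ t)
    (hg : ∀ x ∈ Icc 0 t, g x = g' x) :
    laplaceConv f g t = laplaceConv f g' t :=
  integral_congr fun x hx => by
    rw [uIcc_of_le ht] at hx
    simp only [hg x hx]

lemma laplaceConv_add_right {f g g' : ℝ → ℝ} (hf : Continuous f) (hg : Continuous g)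
    (hg' : Continuous g') (t : ℝ) :
    laplaceConv f (g + g') t = laplaceConv f g t + laplaceConv f g' t := by
  have hf' : Continuous fun x => f (t - x) := hf.comp (continuous_const.sub continuous_id)
  simp only [laplaceConv, Pi.add_apply, mul_add]
  exact integral_add ((hf'.mul hg).intervalIntegrable _ _) ((hf'.mul hg').intervalIntegrable _ _)

lemma Continuous.laplaceConv {f g : ℝ → ℝ} (hf : Continuous f) (hg : Continuous g) :
    Continuous (laplaceConv f g) :=
  continuous_parametric_intervalIntegral_of_continuous
    ((hf.comp (continuous_fst.sub continuous_snd)).mul (hg.comp continuous_snd)) continuous_id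

lemma laplaceConv_laplaceConv_apply (f g u : ℝ → ℝ) (t : ℝ) :
    laplaceConv (laplaceConv f g) u t
      = ∫ x in (0:ℝ)..t, ∫ y in (0:ℝ)..(t - x), f (t - x - y) * g y * u x := by
  refine integral_congr fun x _ => ?_
  simp only [laplaceConv, ← intervalIntegral.integral_mul_const]

lemma laplaceConv_assoc {f g u : ℝ → ℝ} (hf : Continuous f) (hg : Continuous g)
    (hu : Continuous u) {t : ℝ} (ht : 0 ≤ t) :
    laplaceConv f (laplaceConv g u) t = laplaceConv (laplaceConv f g) u t := by
  have hF : Continuous (Function.uncurry fun x y => g (t - x - y) * u y * f x) :=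
    ((hg.comp ((continuous_const.sub continuous_fst).sub continuous_snd)).mul
      (hu.comp continuous_snd)).mul (hf.comp continuous_fst)
  calc laplaceConv f (laplaceConv g u) t
      = ∫ x in (0:ℝ)..t, ∫ y in (0:ℝ)..(t - x), g (t - x - y) * u y * f x := by
        rw [laplaceConv_comm, laplaceConv_laplaceConv_apply]
    _ = ∫ y in (0:ℝ)..t, ∫ x in (0:ℝ)..(t - y), g (t - y - x) * f x * u y := by
        rw [intervalIntegral_intervalIntegral_swap_simplex hF ht]
        refine integral_congr fun y _ => integral_congr fun x _ => ?_
        simp only [sub_right_comm t x y]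
        ring
    _ = laplaceConv (laplaceConv f g) u t := by
        rw [← laplaceConv_laplaceConv_apply, laplaceConv_comm g f]

lemma abs_laplaceConv_le {f g : ℝ → ℝ} {A B γ : ℝ} (m : ℕ)
    (hf : ∀ x ≥ (0:ℝ), |f x| ≤ A * Real.exp (x / γ))
    (hg : ∀ x ≥ (0:ℝ), |g x| ≤ B * x ^ m / m ! * Real.exp (x / γ)) {t : ℝ} (ht : 0 ≤ t) :
    |laplaceConv f g t| ≤ A * B * t ^ (m + 1) / (m + 1)! * Real.exp (t / γ) := by
  have hpoint : ∀ x ∈ Ioc 0 t,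
      ‖f (t - x) * g x‖ ≤ A * B * Real.exp (t / γ) / m ! * x ^ m := by
    intro x hx
    have hfx := hf (t - x) (by linarith [hx.2])
    calc ‖f (t - x) * g x‖ = |f (t - x)| * |g x| := by rw [Real.norm_eq_abs, abs_mul]
      _ ≤ A * Real.exp ((t - x) / γ) * (B * x ^ m / m ! * Real.exp (x / γ)) :=
        mul_le_mul hfx (hg x hx.1.le) (abs_nonneg _) ((abs_nonneg _).trans hfx)
      _ = A * B * Real.exp ((t - x) / γ + x / γ) / m ! * x ^ m := by
        rw [Real.exp_add]; ring
      _ = A * B * Real.exp (t / γ) / m ! * x ^ m := by rw [← add_div, sub_add_cancel]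
  calc |laplaceConv f g t|
      ≤ ∫ x in (0:ℝ)..t, A * B * Real.exp (t / γ) / m ! * x ^ m :=
        norm_integral_le_of_norm_le ht (ae_of_all _ hpoint)
          ((continuous_pow m).const_mul _ |>.intervalIntegrable _ _)
    _ = A * B * t ^ (m + 1) / (m + 1)! * Real.exp (t / γ) := by
        rw [intervalIntegral.integral_const_mul, integral_pow, Nat.factorial_succ]
        push_cast
        field_simp
        ring

section Neumann

variable {ψ : ℝ → ℝ} {K γ : ℝ}

lemma continuous_convPow (hψ : Continuous ψ) (m : ℕ) : Continuous (convPow ψ m) := by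
  induction m with
  | zero => exact hψ
  | succ m ih => exact hψ.laplaceConv ih

lemma laplaceConv_convPow_self (ψ : ℝ → ℝ) (m : ℕ) :
    laplaceConv (convPow ψ m) ψ = convPow ψ (m + 1) := by
  rw [laplaceConv_comm]
  rfl

lemma abs_convPow_le (hψ : ∀ x ≥ (0:ℝ), |ψ x| ≤ K * Real.exp (x / γ)) (m : ℕ) {x : ℝ}
    (hx : 0 ≤ x) : |convPow ψ m x| ≤ K ^ (m + 1) * x ^ m / m ! * Real.exp (x / γ) := by
  induction m generalizing x with
  | zero => simpa [convPow] using hψ x hx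
  | succ m ih => exact (abs_laplaceConv_le m hψ (fun y hy => ih hy) hx).trans_eq (by ring)

lemma summable_laplaceConv_convPow (hψ : ∀ x ≥ (0:ℝ), |ψ x| ≤ K * Real.exp (x / γ))
    {f : ℝ → ℝ} {A : ℝ} (hf : ∀ x ≥ (0:ℝ), |f x| ≤ A * Real.exp (x / γ)) {t : ℝ}
    (ht : 0 ≤ t) : Summable fun m => laplaceConv (convPow ψ m) f t := by
  have hmajorant : Summable fun m : ℕ => A * Real.exp (t / γ) * ((K * t) ^ (m + 1) / (m + 1)!) :=
    ((summable_nat_add_iff 1).2 (Real.summable_pow_div_factorial (K * t))).mul_left _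
  refine hmajorant.of_norm_bounded fun m => ?_
  rw [Real.norm_eq_abs, laplaceConv_comm]
  exact (abs_laplaceConv_le m hf (fun x hx => abs_convPow_le hψ m hx) ht).trans_eq
    (by rw [mul_pow]; ring)

variable {h c : ℝ → ℝ}

lemma renewal_eq_sum_add_remainder (hh : Continuous h) (hc : Continuous c)
    (hψ : Continuous ψ) (hren : ∀ t ≥ (0:ℝ), h t = c t + laplaceConv ψ h t) (N : ℕ) {t : ℝ}
    (ht : 0 ≤ t) :
    h t = c t + ∑ m ∈ Finset.range N, laplaceConv (convPow ψ m) c t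
      + laplaceConv (convPow ψ N) h t := by
  induction N with
  | zero => simpa [convPow] using hren t ht
  | succ N ih =>
    have hN := continuous_convPow hψ N
    have hstep : laplaceConv (convPow ψ N) h t
        = laplaceConv (convPow ψ N) c t + laplaceConv (convPow ψ (N + 1)) h t := by
      rw [laplaceConv_congr_right (g' := c + laplaceConv ψ h) ht fun x hx => hren x hx.1,
        laplaceConv_add_right hN hc (hψ.laplaceConv hh), laplaceConv_assoc hN hψ hh ht,
        laplaceConv_convPow_self]
    rw [Finset.sum_range_succ]
    linarith

theorem hasSum_laplaceConv_convPow_of_renewal (hh : Continuous h) (hc : Continuous c)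
    (hψ : Continuous ψ) {A B : ℝ} (hhexp : ∀ x ≥ (0:ℝ), |h x| ≤ A * Real.exp (x / γ))
    (hcexp : ∀ x ≥ (0:ℝ), |c x| ≤ B * Real.exp (x / γ))
    (hψexp : ∀ x ≥ (0:ℝ), |ψ x| ≤ K * Real.exp (x / γ))
    (hren : ∀ t ≥ (0:ℝ), h t = c t + laplaceConv ψ h t) {t : ℝ} (ht : 0 ≤ t) :
    HasSum (fun m => laplaceConv (convPow ψ m) c t) (h t - c t) := by
  have hremainder : Tendsto (fun N => laplaceConv (convPow ψ N) h t) atTop (𝓝 0) :=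
    (summable_laplaceConv_convPow hψexp hhexp ht).tendsto_atTop_zero
  refine (summable_laplaceConv_convPow hψexp hcexp ht).hasSum_iff_tendsto_nat.2 ?_
  have hpartial : ∀ N, ∑ m ∈ Finset.range N, laplaceConv (convPow ψ m) c t
      = h t - c t - laplaceConv (convPow ψ N) h t := fun N => by
    linarith [renewal_eq_sum_add_remainder hh hc hψ hren N ht]
  simpa [hpartial] using (tendsto_const_nhds (x := h t - c t)).sub hremainder

end Neumann

theorem renewal_equation_neumann_series_general
    (h c ψ : ℝ → ℝ) (hh : Continuous h) (hc : Continuous c) (hψ : Continuous ψ)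
    (K γ : ℝ)
    (hhexp : ∀ t ≥ (0:ℝ), |h t| ≤ K * Real.exp (t / γ))
    (hcexp : ∀ t ≥ (0:ℝ), |c t| ≤ K * Real.exp (t / γ))
    (hψexp : ∀ t ≥ (0:ℝ), |ψ t| ≤ K * Real.exp (t / γ))
    (hrenewal : ∀ t ≥ (0:ℝ),
      h t = c t + ∫ x in (0:ℝ)..t, ψ (t - x) * h x) :
    ∀ t ≥ (0:ℝ),
      h t = c t + ∑' m : ℕ, ∫ x in (0:ℝ)..t, convPow ψ m (t - x) * c x := by
  intro t ht
  show h t = c t + ∑' m, laplaceConv (convPow ψ m) c t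
  rw [(hasSum_laplaceConv_convPow_of_renewal hh hc hψ hhexp hcexp hψexp hrenewal ht).tsum_eq]
  ring

/-- solution of the renewal equation by a Neumann series:
h(t) = c(t) + Σ_{m≥1} (ψ_m ∗ c)(t). -/
theorem renewal_equation_neumann_series
    (h c ψ : ℝ → ℝ) (hh : Continuous h) (hc : Continuous c) (hψ : Continuous ψ)
    (K γ : ℝ) (hK : 0 < K) (hγ : 0 < γ)
    (hhexp : ∀ t ≥ (0:ℝ), |h t| ≤ K * Real.exp (t / γ))
    (hcexp : ∀ t ≥ (0:ℝ), |c t| ≤ K * Real.exp (t / γ))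
    (hψexp : ∀ t ≥ (0:ℝ), |ψ t| ≤ K * Real.exp (t / γ))
    (hrenewal : ∀ t ≥ (0:ℝ),
      h t = c t + ∫ x in (0:ℝ)..t, ψ (t - x) * h x)
    (hconv : ∀ T > (0:ℝ),
      TendstoUniformlyOn
        (fun N t => ∑ m ∈ Finset.range N, convPow ψ m t)
        (fun t => ∑' m : ℕ, convPow ψ m t) atTop (Icc 0 T)) :
    ∀ t ≥ (0:ℝ),
      h t = c t + ∑' m : ℕ, ∫ x in (0:ℝ)..t, convPow ψ m (t - x) * c x :=
  renewal_equation_neumann_series_general h c ψ hh hc hψ K γ hhexp hcexp hψexp hrenewal
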